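/- Let (Ω,T) be a strictly ergodic subshift over a finite alphabet A ⊂ ℝ and let E ∈ ℝ. For a word x ∈ W of length n = |x|, the quantity F^E(x) := log‖M^E(n,ω)‖, taken for any ω ∈ Ω with ω(1)⋯ω(n) = x, is well defined (independent of the choice of ω). Moreover, M^E is uniform if and only if the limit lim_{|x|→∞} F^E(x)/|x| over words x ∈ W exists, i.e. there is L ∈ ℝ such that for every ε > 0 there exists N with |F^E(x)/|x| − L| ≤ ε for all x ∈ W with |x| ≥ N. -/

import Mathlib

/-!
`log ‖M^E(n, ω)‖` depends only on `ω(1) ⋯ ω(n)`, so convergence of `F^E(x)/|x|` over words is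
the same as uniform convergence on `Ω` of `(1/n) log ‖M^E(n, ω)‖` for `n > 0`. Negative times
reduce to positive ones: `Ω` is shift invariant and `‖M⁻¹‖ = ‖M‖` on `SL(2, ℝ)`, because the
adjugate is `J Mᵀ J⁻¹` with `J` orthogonal. Finally, if the word limit `L` exists, integrating
against the invariant measure gives `(1/n) ∫ log ‖M^E(n, ·)‖ dμ → L`; this sequence is
subadditive, so by Fekete's lemma its limit is its infimum `γ(E)`, i.e. `L = γ(E)`.
-/

open MeasureTheory

/-- The operator norm (on the Euclidean space `ℝ²`) of a real 2×2 matrix. -/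
noncomputable def opNorm (M : Matrix (Fin 2) (Fin 2) ℝ) : ℝ :=
  ‖LinearMap.toContinuousLinearMap (Matrix.toEuclideanLin M)‖

/-- The `n`-th power of the shift: `(shiftZ n ω) m = ω (m + n)`. -/
def shiftZ (n : ℤ) (ω : ℤ → ℝ) : ℤ → ℝ := fun m => ω (m + n)

/-- The shift `T`. -/
def shift : (ℤ → ℝ) → (ℤ → ℝ) := shiftZ 1

/-- `Ω` is a subshift over the finite alphabet `A ⊂ ℝ`. -/
structure IsSubshift (A : Finset ℝ) (Ω : Set (ℤ → ℝ)) : Prop where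
  closed : IsClosed Ω
  vals : ∀ ω ∈ Ω, ∀ n : ℤ, ω n ∈ A
  inv : shift '' Ω = Ω

/-- Minimality: every orbit is dense (in `Ω`). -/
def IsMinimalSubshift (Ω : Set (ℤ → ℝ)) : Prop :=
  ∀ ω ∈ Ω, ∀ ω' ∈ Ω, ω' ∈ closure {x | ∃ n : ℤ, shiftZ n ω = x}

/-- `μ` is a `T`-invariant Borel probability measure on `Ω`. -/
def IsInvProb (Ω : Set (ℤ → ℝ)) (μ : Measure (ℤ → ℝ)) : Prop :=
  IsProbabilityMeasure μ ∧ μ Ωᶜ = 0 ∧ μ.map shift = μ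

/-- `(Ω,T)` is uniquely ergodic with unique invariant probability measure `μ`. -/
def IsUniquelyErgodicWith (Ω : Set (ℤ → ℝ)) (μ : Measure (ℤ → ℝ)) : Prop :=
  IsInvProb Ω μ ∧ ∀ ν : Measure (ℤ → ℝ), IsInvProb Ω ν → ν = μ

/-- The one-step transfer matrix `M^E(ω)`. -/
noncomputable def transferMat (E : ℝ) (ω : ℤ → ℝ) : Matrix (Fin 2) (Fin 2) ℝ :=
  !![E - ω 1, -1; 1, 0]

/-- `M^E(n, ω)` for `n ≥ 0`. -/
noncomputable def cocP (E : ℝ) : ℕ → (ℤ → ℝ) → Matrix (Fin 2) (Fin 2) ℝ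
  | 0, _ => 1
  | (k+1), ω => transferMat E (shiftZ k ω) * cocP E k ω

/-- The transfer matrix cocycle `M^E(n, ω)`, `n ∈ ℤ`. -/
noncomputable def coc (E : ℝ) (n : ℤ) (ω : ℤ → ℝ) : Matrix (Fin 2) (Fin 2) ℝ :=
  if 0 ≤ n then cocP E n.toNat ω else (cocP E (-n).toNat (shiftZ n ω))⁻¹

/-- The Lyapunov exponent `γ(E) = inf_{n ≥ 1} (1/n) ∫ log ‖M^E(n,ω)‖ dμ(ω)`. -/
noncomputable def lyap (μ : Measure (ℤ → ℝ)) (E : ℝ) : ℝ :=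
  ⨅ n : ℕ+, (1 / (n : ℝ)) * ∫ ω, Real.log (opNorm (cocP E (n : ℕ) ω)) ∂μ

/-- `(1/|n|) log ‖M^E(n,ω)‖ → L` as `|n| → ∞`, uniformly in `ω ∈ Ω`. -/
def IsUniformAt (Ω : Set (ℤ → ℝ)) (E : ℝ) (L : ℝ) : Prop :=
  ∀ ε > (0 : ℝ), ∃ N : ℕ, ∀ n : ℤ, (N : ℤ) ≤ |n| → ∀ ω ∈ Ω,
    |(1 / ((|n| : ℤ) : ℝ)) * Real.log (opNorm (coc E n ω)) - L| ≤ ε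

/-- `ℓ²(ℤ)`. -/
noncomputable abbrev ellTwo := lp (fun _ : ℤ => ℝ) 2

/-- `H` is the Schrödinger operator with potential `ω`:
`(H u)(n) = u(n+1) + u(n-1) + ω(n) u(n)`. -/
def IsSchrodingerOp (ω : ℤ → ℝ) (H : ellTwo →L[ℝ] ellTwo) : Prop :=
  ∀ u : ellTwo, ∀ n : ℤ, H u n = u (n + 1) + u (n - 1) + ω n * u n


/-- `x` is a (finite, nonempty) word of the subshift `Ω`. -/
def IsWordOf (Ω : Set (ℤ → ℝ)) (x : List ℝ) : Prop :=
  x ≠ [] ∧ ∃ ω ∈ Ω, ∃ k : ℤ, ∀ i : ℕ, i < x.length → x.getD i 0 = ω (k + 1 + i)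

open scoped Classical in
/-- The number of occurrences of `v` as a subword of `x`. -/
noncomputable def occ (v x : List ℝ) : ℕ :=
  ((Finset.range (x.length + 1 - v.length)).filter
    (fun i => (x.drop i).take v.length = v)).card

/-- Uniform positivity of weights (PW). -/
def PW (Ω : Set (ℤ → ℝ)) : Prop :=
  ∃ C > (0 : ℝ), ∀ v : List ℝ, IsWordOf Ω v → ∀ ε > (0 : ℝ), ∃ N : ℕ,
    ∀ x : List ℝ, IsWordOf Ω x → N ≤ x.length →
      C - ε ≤ ((occ v x : ℝ) / (x.length : ℝ)) * (v.length : ℝ)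

section MatrixNorm

open scoped Matrix.Norms.L2Operator

lemma opNorm_eq_norm (M : Matrix (Fin 2) (Fin 2) ℝ) : opNorm M = ‖M‖ := rfl

def rotJ : Matrix (Fin 2) (Fin 2) ℝ := !![0, 1; -1, 0]

lemma star_rotJ : star rotJ = !![0, -1; 1, 0] := by
  ext i j; fin_cases i <;> fin_cases j <;> simp [rotJ, Matrix.star_apply]

lemma rotJ_mem_unitary : rotJ ∈ unitary (Matrix (Fin 2) (Fin 2) ℝ) := by
  rw [Unitary.mem_iff, star_rotJ, rotJ]
  constructor <;> simp [Matrix.one_fin_two]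

lemma adjugate_eq_rotJ_mul (M : Matrix (Fin 2) (Fin 2) ℝ) :
    M.adjugate = rotJ * star M * star rotJ := by
  rw [star_rotJ, Matrix.adjugate_fin_two]
  ext i j
  fin_cases i <;> fin_cases j <;>
    simp [rotJ, Matrix.mul_apply, Matrix.vecMul, dotProduct, Fin.sum_univ_two, Matrix.star_apply]

lemma norm_adjugate_fin_two (M : Matrix (Fin 2) (Fin 2) ℝ) : ‖M.adjugate‖ = ‖M‖ := by
  rw [adjugate_eq_rotJ_mul,
    CStarRing.norm_mul_coe_unitary _ ⟨_, Unitary.star_mem rotJ_mem_unitary⟩,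
    CStarRing.norm_coe_unitary_mul ⟨_, rotJ_mem_unitary⟩, norm_star]

lemma norm_inv_of_det_eq_one {M : Matrix (Fin 2) (Fin 2) ℝ} (h : M.det = 1) : ‖M⁻¹‖ = ‖M‖ := by
  rw [Matrix.inv_def, h, Ring.inverse_one, one_smul, norm_adjugate_fin_two]

lemma one_le_norm_of_det_eq_one {M : Matrix (Fin 2) (Fin 2) ℝ} (h : M.det = 1) : 1 ≤ ‖M‖ := by
  have hM : M * M⁻¹ = 1 := Matrix.mul_nonsing_inv M (by simp [h])
  have : 1 ≤ ‖M‖ * ‖M‖ :=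
    calc 1 = ‖M * M⁻¹‖ := by rw [hM, CStarRing.norm_one]
      _ ≤ ‖M‖ * ‖M⁻¹‖ := norm_mul_le _ _
      _ = ‖M‖ * ‖M‖ := by rw [norm_inv_of_det_eq_one h]
  nlinarith [norm_nonneg M]

lemma log_norm_mul_le_of_det_eq_one {M N : Matrix (Fin 2) (Fin 2) ℝ} (hM : M.det = 1)
    (hN : N.det = 1) : Real.log ‖M * N‖ ≤ Real.log ‖M‖ + Real.log ‖N‖ := by
  have hMN : (M * N).det = 1 := by rw [Matrix.det_mul, hM, hN, one_mul]
  rw [← Real.log_mul (by linarith [one_le_norm_of_det_eq_one hM])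
    (by linarith [one_le_norm_of_det_eq_one hN])]
  exact Real.log_le_log (by linarith [one_le_norm_of_det_eq_one hMN]) (norm_mul_le M N)

end MatrixNorm

lemma shiftZ_shiftZ (a b : ℤ) (ω : ℤ → ℝ) : shiftZ a (shiftZ b ω) = shiftZ (a + b) ω := by
  funext m; simp [shiftZ, add_assoc, add_comm a]

lemma shiftZ_zero : shiftZ 0 = id := by
  funext ω m; simp [shiftZ]

lemma shiftZ_natCast (n : ℕ) : shiftZ n = shift^[n] := by
  induction n with
  | zero => exact shiftZ_zero
  | succ n ih =>
    rw [Function.iterate_succ', ← ih]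
    funext ω
    simp [shift, shiftZ_shiftZ, add_comm]

lemma continuous_shiftZ (n : ℤ) : Continuous (shiftZ n) :=
  continuous_pi fun _ => continuous_apply _

lemma shiftZ_mem {Ω : Set (ℤ → ℝ)} (hinv : shift '' Ω = Ω) (n : ℤ) {ω : ℤ → ℝ}
    (hω : ω ∈ Ω) : shiftZ n ω ∈ Ω := by
  have hback : ∀ σ ∈ Ω, shiftZ (-1) σ ∈ Ω := by
    intro σ hσ
    obtain ⟨τ, hτ, rfl⟩ := hinv.symm ▸ hσ
    simpa [shift, shiftZ_shiftZ, shiftZ_zero] using hτ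
  induction n using Int.induction_on with
  | zero => simpa [shiftZ_zero] using hω
  | succ k ih =>
    rw [add_comm, ← shiftZ_shiftZ, ← hinv]
    exact Set.mem_image_of_mem _ ih
  | pred k ih =>
    rw [sub_eq_neg_add, ← shiftZ_shiftZ]
    exact hback _ ih

lemma IsSubshift.isCompact {A : Finset ℝ} {Ω : Set (ℤ → ℝ)} (hΩ : IsSubshift A Ω) :
    IsCompact Ω :=
  (isCompact_univ_pi fun _ => A.finite_toSet.isCompact).of_isClosed_subset hΩ.closed
    fun ω hω n _ => hΩ.vals ω hω n

lemma det_transferMat (E : ℝ) (ω : ℤ → ℝ) : (transferMat E ω).det = 1 := by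
  simp [transferMat, Matrix.det_fin_two_of]

lemma det_cocP (E : ℝ) (n : ℕ) (ω : ℤ → ℝ) : (cocP E n ω).det = 1 := by
  induction n with
  | zero => simp [cocP]
  | succ k ih => simp [cocP, Matrix.det_mul, ih, det_transferMat]

lemma cocP_congr (E : ℝ) {n : ℕ} {ω ω' : ℤ → ℝ} (h : ∀ i < n, ω (1 + i) = ω' (1 + i)) :
    cocP E n ω = cocP E n ω' := by
  induction n with
  | zero => rfl
  | succ k ih =>
    have hk : shiftZ k ω 1 = shiftZ k ω' 1 := by
      simpa [shiftZ, add_comm] using h k k.lt_succ_self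
    simp only [cocP, transferMat, hk, ih fun i hi => h i (Nat.lt_succ_of_lt hi)]

lemma cocP_add (E : ℝ) (p q : ℕ) (ω : ℤ → ℝ) :
    cocP E (p + q) ω = cocP E q (shiftZ p ω) * cocP E p ω := by
  induction q with
  | zero => simp [cocP]
  | succ k ih =>
    rw [← add_assoc, cocP, cocP, ih, shiftZ_shiftZ, ← mul_assoc]
    push_cast
    rw [add_comm (k : ℤ)]

lemma coc_natCast (E : ℝ) (n : ℕ) (ω : ℤ → ℝ) : coc E n ω = cocP E n ω := by
  simp [coc]

lemma coc_neg (E : ℝ) {n : ℤ} (hn : n < 0) (ω : ℤ → ℝ) :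
    coc E n ω = (cocP E n.natAbs (shiftZ n ω))⁻¹ := by
  rw [coc, if_neg hn.not_ge]
  congr
  omega

lemma continuous_transferMat (E : ℝ) : Continuous (transferMat E) := by
  unfold transferMat
  fun_prop

lemma continuous_cocP (E : ℝ) (n : ℕ) : Continuous (cocP E n) := by
  induction n with
  | zero => exact continuous_const
  | succ k ih => exact ((continuous_transferMat E).comp (continuous_shiftZ k)).matrix_mul ih

noncomputable def logNormCoc (E : ℝ) (n : ℕ) (ω : ℤ → ℝ) : ℝ :=
  Real.log (opNorm (cocP E n ω))

section LogNorm

open scoped Matrix.Norms.L2Operator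

lemma logNormCoc_nonneg (E : ℝ) (n : ℕ) (ω : ℤ → ℝ) : 0 ≤ logNormCoc E n ω :=
  Real.log_nonneg (one_le_norm_of_det_eq_one (det_cocP E n ω))

lemma logNormCoc_add_le (E : ℝ) (p q : ℕ) (ω : ℤ → ℝ) :
    logNormCoc E (p + q) ω ≤ logNormCoc E q (shiftZ p ω) + logNormCoc E p ω := by
  simp only [logNormCoc, opNorm_eq_norm, cocP_add]
  exact log_norm_mul_le_of_det_eq_one (det_cocP E q _) (det_cocP E p ω)

lemma continuous_logNormCoc (E : ℝ) (n : ℕ) : Continuous (logNormCoc E n) :=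
  (continuous_norm.comp (continuous_cocP E n)).log fun ω =>
    (zero_lt_one.trans_le (one_le_norm_of_det_eq_one (det_cocP E n ω))).ne'

lemma log_opNorm_coc_eq {Ω : Set (ℤ → ℝ)} (hinv : shift '' Ω = Ω) (E : ℝ) (n : ℤ)
    {ω : ℤ → ℝ} (hω : ω ∈ Ω) :
    ∃ σ ∈ Ω, Real.log (opNorm (coc E n ω)) = logNormCoc E n.natAbs σ := by
  rcases le_or_gt 0 n with hn | hn
  · refine ⟨ω, hω, ?_⟩
    rw [← Int.natAbs_of_nonneg hn, coc_natCast, Int.natAbs_natCast, logNormCoc]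
  · refine ⟨shiftZ n ω, shiftZ_mem hinv n hω, ?_⟩
    rw [coc_neg E hn, logNormCoc, opNorm_eq_norm, opNorm_eq_norm,
      norm_inv_of_det_eq_one (det_cocP E _ _)]

end LogNorm

open Filter Topology

lemma tendstoUniformlyOn_const_iff_le {X : Type*} {F : ℕ → X → ℝ} {L : ℝ} {s : Set X} :
    TendstoUniformlyOn F (fun _ => L) atTop s ↔
      ∀ ε > 0, ∃ N : ℕ, ∀ n ≥ N, ∀ x ∈ s, |F n x - L| ≤ ε := by
  simp only [Metric.tendstoUniformlyOn_iff, eventually_atTop, dist_comm L, Real.dist_eq]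
  refine ⟨fun h ε hε => ?_, fun h ε hε => ?_⟩
  · obtain ⟨N, hN⟩ := h ε hε
    exact ⟨N, fun n hn x hx => (hN n hn x hx).le⟩
  · obtain ⟨N, hN⟩ := h (ε / 2) (half_pos hε)
    exact ⟨N, fun n hn x hx => (hN n hn x hx).trans_lt (half_lt_self hε)⟩

lemma Subadditive.iInf_pnat_div_eq {u : ℕ → ℝ} {L : ℝ} (h : Subadditive u)
    (hbdd : BddBelow (Set.range fun n => u n / n))
    (hL : Tendsto (fun n => u n / n) atTop (𝓝 L)) :
    ⨅ n : ℕ+, u n / n = L := by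
  have hlim : h.lim = L := tendsto_nhds_unique (h.tendsto_lim hbdd) hL
  have hbdd' : BddBelow (Set.range fun n : ℕ+ => u n / n) :=
    hbdd.mono <| Set.range_comp_subset_range ((↑) : ℕ+ → ℕ) fun n => u n / n
  refine le_antisymm (ge_of_tendsto hL (eventually_atTop.2 ⟨1, fun n hn => ?_⟩)) ?_
  · exact ciInf_le hbdd' ⟨n, hn⟩
  · exact le_ciInf fun n => hlim ▸ h.lim_le_div hbdd n.ne_zero

lemma tendsto_integral_of_tendstoUniformlyOn {X : Type*} [MeasurableSpace X] {μ : Measure X}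
    [IsProbabilityMeasure μ] {s : Set X} (hs : ∀ᵐ x ∂μ, x ∈ s) {F : ℕ → X → ℝ} {L : ℝ}
    (hF : ∀ n, Integrable (F n) μ) (hU : TendstoUniformlyOn F (fun _ => L) atTop s) :
    Tendsto (fun n => ∫ x, F n x ∂μ) atTop (𝓝 L) := by
  rw [Metric.tendsto_atTop]
  intro ε hε
  obtain ⟨N, hN⟩ := tendstoUniformlyOn_const_iff_le.1 hU (ε / 2) (half_pos hε)
  refine ⟨N, fun n hn => ?_⟩
  have hbound : ‖∫ x, (F n x - L) ∂μ‖ ≤ ε / 2 := by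
    simpa using norm_integral_le_of_norm_le_const (μ := μ) (f := fun x => F n x - L)
      (hs.mono fun x hx => (Real.norm_eq_abs _).trans_le (hN n hn x hx))
  rw [integral_sub (hF n) (integrable_const L), integral_const] at hbound
  rw [Real.dist_eq]
  simpa using hbound.trans_lt (half_lt_self hε)

section InvariantMeasure

variable {Ω : Set (ℤ → ℝ)} {μ : Measure (ℤ → ℝ)}

lemma IsInvProb.measurePreserving_shiftZ (hμ : IsInvProb Ω μ) (n : ℕ) :
    MeasurePreserving (shiftZ n) μ μ := by
  rw [shiftZ_natCast]
  exact MeasurePreserving.iterate ⟨(continuous_shiftZ 1).measurable, hμ.2.2⟩ n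

lemma IsInvProb.ae_mem (hμ : IsInvProb Ω μ) : ∀ᵐ ω ∂μ, ω ∈ Ω := hμ.2.1

lemma IsInvProb.integrable_logNormCoc {A : Finset ℝ} (hΩ : IsSubshift A Ω)
    (hμ : IsInvProb Ω μ) (E : ℝ) (n : ℕ) : Integrable (logNormCoc E n) μ := by
  have := hμ.1
  rw [← Measure.restrict_eq_self_of_ae_mem hμ.ae_mem]
  exact (continuous_logNormCoc E n).continuousOn.integrableOn_compact hΩ.isCompact

lemma IsInvProb.subadditive_integral_logNormCoc {A : Finset ℝ} (hΩ : IsSubshift A Ω)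
    (hμ : IsInvProb Ω μ) (E : ℝ) : Subadditive fun n => ∫ ω, logNormCoc E n ω ∂μ := by
  intro p q
  have hint := hμ.integrable_logNormCoc hΩ E
  have hshift := hμ.measurePreserving_shiftZ p
  have hcomp : Integrable (fun ω => logNormCoc E q (shiftZ p ω)) μ :=
    hshift.integrable_comp_of_integrable (hint q)
  calc ∫ ω, logNormCoc E (p + q) ω ∂μ
      ≤ ∫ ω, (logNormCoc E q (shiftZ p ω) + logNormCoc E p ω) ∂μ :=
        integral_mono (hint _) (hcomp.add (hint p)) (logNormCoc_add_le E p q)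
    _ = ∫ ω, logNormCoc E q ω ∂μ + ∫ ω, logNormCoc E p ω ∂μ := by
        rw [integral_add hcomp (hint p), ← integral_map hshift.measurable.aemeasurable
          (continuous_logNormCoc E q).aestronglyMeasurable, hshift.map_eq]
    _ = _ := add_comm _ _

theorem lyap_eq_of_tendstoUniformlyOn {A : Finset ℝ} (hΩ : IsSubshift A Ω)
    (hμ : IsInvProb Ω μ) {E L : ℝ}
    (hU : TendstoUniformlyOn (fun n ω => logNormCoc E n ω / n) (fun _ => L) atTop Ω) :
    lyap μ E = L := by
  have := hμ.1
  have hint := hμ.integrable_logNormCoc hΩ E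
  have hL : Tendsto (fun n : ℕ => (∫ ω, logNormCoc E n ω ∂μ) / n) atTop (𝓝 L) := by
    simpa only [integral_div] using
      tendsto_integral_of_tendstoUniformlyOn hμ.ae_mem (fun n => (hint n).div_const _) hU
  have hbdd : BddBelow (Set.range fun n : ℕ => (∫ ω, logNormCoc E n ω ∂μ) / n) :=
    ⟨0, Set.forall_mem_range.2 fun n =>
      div_nonneg (integral_nonneg (logNormCoc_nonneg E n)) n.cast_nonneg⟩
  rw [← (hμ.subadditive_integral_logNormCoc hΩ E).iInf_pnat_div_eq hbdd hL, lyap]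
  simp only [one_div_mul_eq_div, logNormCoc]

end InvariantMeasure

lemma isUniformAt_iff_tendstoUniformlyOn {Ω : Set (ℤ → ℝ)} (hinv : shift '' Ω = Ω)
    (E L : ℝ) :
    IsUniformAt Ω E L ↔
      TendstoUniformlyOn (fun n ω => logNormCoc E n ω / n) (fun _ => L) atTop Ω := by
  rw [tendstoUniformlyOn_const_iff_le]
  refine ⟨fun h ε hε => ?_, fun h ε hε => ?_⟩
  · obtain ⟨N, hN⟩ := h ε hε
    refine ⟨N, fun n hn ω hω => ?_⟩
    have := hN n (by simpa using hn) ω hω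
    rwa [coc_natCast, Nat.abs_cast, Int.cast_natCast, one_div_mul_eq_div] at this
  · obtain ⟨N, hN⟩ := h ε hε
    refine ⟨N, fun n hn ω hω => ?_⟩
    obtain ⟨σ, hσ, heq⟩ := log_opNorm_coc_eq hinv E n hω
    rw [heq, ← Int.natCast_natAbs, Int.cast_natCast, one_div_mul_eq_div]
    exact hN _ (by rw [Int.abs_eq_natAbs] at hn; omega) σ hσ

lemma tendstoUniformlyOn_iff_word_limit {Ω : Set (ℤ → ℝ)} (E L : ℝ) :
    TendstoUniformlyOn (fun n ω => logNormCoc E n ω / n) (fun _ => L) atTop Ω ↔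
      ∀ ε > (0 : ℝ), ∃ N : ℕ, ∀ x : List ℝ, IsWordOf Ω x → N ≤ x.length →
        ∀ ω ∈ Ω, (∀ i : ℕ, i < x.length → x.getD i 0 = ω (1 + i)) →
          |Real.log (opNorm (cocP E x.length ω)) / (x.length : ℝ) - L| ≤ ε := by
  rw [tendstoUniformlyOn_const_iff_le]
  refine ⟨fun h ε hε => ?_, fun h ε hε => ?_⟩
  · obtain ⟨N, hN⟩ := h ε hε
    exact ⟨N, fun x _ hx ω hω _ => hN x.length hx ω hω⟩
  · obtain ⟨N, hN⟩ := h ε hε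
    refine ⟨N + 1, fun n hn ω hω => ?_⟩
    set x := List.ofFn fun j : Fin n => ω (1 + j)
    have hlen : x.length = n := List.length_ofFn
    have hprefix : ∀ i < x.length, x.getD i 0 = ω (1 + i) := fun i hi => by
      simp [x, hlen ▸ hi]
    have hword : IsWordOf Ω x :=
      ⟨List.ne_nil_of_length_pos (by omega), ω, hω, 0, by simpa using hprefix⟩
    simpa [hlen, logNormCoc] using hN x hword (by omega) ω hω hprefix

theorem uniform_iff_word_limit_general
    (A : Finset ℝ) (Ω : Set (ℤ → ℝ)) (μ : Measure (ℤ → ℝ))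
    (hsub : IsSubshift A Ω)
    (hue : IsUniquelyErgodicWith Ω μ) (E : ℝ) :
    (∀ x : List ℝ, IsWordOf Ω x → ∀ ω ∈ Ω, ∀ ω' ∈ Ω,
      (∀ i : ℕ, i < x.length → x.getD i 0 = ω (1 + i)) →
      (∀ i : ℕ, i < x.length → x.getD i 0 = ω' (1 + i)) →
      Real.log (opNorm (cocP E x.length ω)) = Real.log (opNorm (cocP E x.length ω'))) ∧
    (IsUniformAt Ω E (lyap μ E) ↔
      ∃ L : ℝ, ∀ ε > (0 : ℝ), ∃ N : ℕ, ∀ x : List ℝ, IsWordOf Ω x → N ≤ x.length →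
        ∀ ω ∈ Ω, (∀ i : ℕ, i < x.length → x.getD i 0 = ω (1 + i)) →
          |Real.log (opNorm (cocP E x.length ω)) / (x.length : ℝ) - L| ≤ ε) := by
  refine ⟨fun x _ ω _ ω' _ hx hx' => ?_, ?_⟩
  · rw [cocP_congr E fun i hi => (hx i hi).symm.trans (hx' i hi)]
  simp_rw [isUniformAt_iff_tendstoUniformlyOn hsub.inv, ← tendstoUniformlyOn_iff_word_limit]
  refine ⟨fun h => ⟨_, h⟩, fun ⟨L, hL⟩ => ?_⟩
  rwa [lyap_eq_of_tendstoUniformlyOn hsub hue.1 hL]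

/-- `F^E(x) = log ‖M^E(|x|, ω)‖` (for any `ω ∈ Ω` beginning with `x` at
positions `1, …, |x|`) is well defined, and `M^E` is uniform if and only if the limit
`lim_{|x| → ∞} F^E(x)/|x|` over words exists. -/
theorem uniform_iff_word_limit
    (A : Finset ℝ) (Ω : Set (ℤ → ℝ)) (μ : Measure (ℤ → ℝ))
    (hsub : IsSubshift A Ω) (hmin : IsMinimalSubshift Ω)
    (hue : IsUniquelyErgodicWith Ω μ) (E : ℝ) :
    (∀ x : List ℝ, IsWordOf Ω x → ∀ ω ∈ Ω, ∀ ω' ∈ Ω,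
      (∀ i : ℕ, i < x.length → x.getD i 0 = ω (1 + i)) →
      (∀ i : ℕ, i < x.length → x.getD i 0 = ω' (1 + i)) →
      Real.log (opNorm (cocP E x.length ω)) = Real.log (opNorm (cocP E x.length ω'))) ∧
    (IsUniformAt Ω E (lyap μ E) ↔
      ∃ L : ℝ, ∀ ε > (0 : ℝ), ∃ N : ℕ, ∀ x : List ℝ, IsWordOf Ω x → N ≤ x.length →
        ∀ ω ∈ Ω, (∀ i : ℕ, i < x.length → x.getD i 0 = ω (1 + i)) →
          |Real.log (opNorm (cocP E x.length ω)) / (x.length : ℝ) - L| ≤ ε) :=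
  uniform_iff_word_limit_general A Ω μ hsub hue E
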